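/- arXiv:1712.08635 — 2 statements merged into one kernel-verified Lean document; each statement's English description precedes it below -/
import Mathlib

section
/- Let W ∈ L⁴(𝕋²) with ‖W‖_{L⁴} > 0. If w ∈ L²(𝕋²) satisfies −Δw = λw for some λ and Ww = 0 almost everywhere, then w = 0. Consequently the space N = {u ∈ L²(𝕋²) : W e^{itΔ}u ≡ 0 on (0,T)×𝕋²} is trivial, provided N is invariant under Δ and every nontrivial closed Δ-invariant subspace of L² contains an eigenfunction. -/
open MeasureTheory Filter Topology

noncomputable section

abbrev 𝕋 := AddCircle (2 * Real.pi)

instance : Fact (0 < 2 * Real.pi) := ⟨by positivity⟩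

abbrev 𝕋2 := 𝕋 × 𝕋

def char (n : ℤ × ℤ) (z : 𝕋2) : ℂ := fourier n.1 z.1 * fourier n.2 z.2


/-- `w` is an eigenfunction of `-Δ` on `𝕋²` with eigenvalue `lam`: a.e. equal to a
trigonometric polynomial whose frequencies `n` satisfy `|n|² = lam`. -/
def IsEig (lam : ℝ) (w : 𝕋2 → ℂ) : Prop :=
  ∃ F : Finset (ℤ × ℤ), ∃ c : ℤ × ℤ → ℂ,
    (∀ n ∈ F, ((n.1 : ℝ) ^ 2 + (n.2 : ℝ) ^ 2 = lam ∧ c n ≠ 0)) ∧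
      ∀ᵐ z ∂volume, w z = ∑ n ∈ F, c n * char n z

/-!
A nonzero eigenfunction of `-Δ` is a nonzero trigonometric polynomial, and such a polynomial
vanishes only on a null set. On the circle, writing `ζ = e^{ix}` turns it into a nonzero Laurent
polynomial in `ζ`, which has finitely many roots; on `𝕋²`, grouping by the second frequency gives,
for almost every `x`, a nonzero trigonometric polynomial in `y`, and Fubini concludes. Hence
`W w = 0` a.e. with `w ≠ 0` forces `W = 0` a.e.
-/

instance AddCircle.nullSingletonClass_volume (T : ℝ) [Fact (0 < T)] :
    NullSingletonClass (volume : Measure (AddCircle T)) :=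
  ⟨fun x => by simpa using AddCircle.volume_closedBall (T := T) (x := x) 0⟩

theorem finite_setOf_sum_mul_zpow_eq_zero {K ι : Type*} [Field K] (F : Finset ι) (e : ι → ℤ)
    (he : Set.InjOn e F) (c : ι → K) (hc : ∃ i ∈ F, c i ≠ 0) :
    {z : K | z ≠ 0 ∧ ∑ i ∈ F, c i * z ^ e i = 0}.Finite := by
  classical
  obtain ⟨i₀, hi₀, hci₀⟩ := hc
  set M : ℕ := ∑ i ∈ F, (e i).natAbs
  have hM : ∀ i ∈ F, 0 ≤ e i + M := fun i hi => by
    have : (e i).natAbs ≤ M := Finset.single_le_sum (f := fun i => (e i).natAbs) (by simp) hi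
    omega
  -- multiplying by `z ^ M` clears the negative exponents
  set m : ι → ℕ := fun i => (e i + M).toNat
  have hm : ∀ i ∈ F, (m i : ℤ) = e i + M := fun i hi => Int.toNat_of_nonneg (hM i hi)
  set Q : Polynomial K := ∑ i ∈ F, Polynomial.C (c i) * Polynomial.X ^ m i
  have hQ_coeff : Q.coeff (m i₀) = c i₀ := by
    rw [Polynomial.finsetSum_coeff, Finset.sum_eq_single i₀]
    · simp [Polynomial.coeff_C_mul, Polynomial.coeff_X_pow]
    · intro i hi hne
      have : m i ≠ m i₀ := fun h => hne (he hi hi₀ (by linarith [hm i hi, hm i₀ hi₀]))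
      simp [Polynomial.coeff_C_mul, Polynomial.coeff_X_pow, Ne.symm this]
    · exact fun h => absurd hi₀ h
  have hQ : Q ≠ 0 := fun h => hci₀ (by rw [← hQ_coeff, h, Polynomial.coeff_zero])
  have hQ_eval : ∀ z ≠ 0, Q.eval z = (∑ i ∈ F, c i * z ^ e i) * z ^ (M : ℤ) := by
    intro z hz
    simp only [Q, Polynomial.eval_finsetSum, Finset.sum_mul, Polynomial.eval_mul,
      Polynomial.eval_C, Polynomial.eval_pow, Polynomial.eval_X]
    refine Finset.sum_congr rfl fun i hi => ?_
    rw [mul_assoc, ← zpow_add₀ hz, ← hm i hi, zpow_natCast]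
  refine (Polynomial.finite_setOfPred_isRoot hQ).subset fun z ⟨hz, hsum⟩ => ?_
  simp [Polynomial.IsRoot, hQ_eval z hz, hsum]

theorem AddCircle.ae_sum_mul_fourier_ne_zero {T : ℝ} [Fact (0 < T)] {ι : Type*}
    (F : Finset ι) (e : ι → ℤ) (he : Set.InjOn e F) (c : ι → ℂ) (hc : ∃ i ∈ F, c i ≠ 0) :
    ∀ᵐ x : AddCircle T, ∑ i ∈ F, c i * fourier (e i) x ≠ 0 := by
  have hinj : Function.Injective fun x : AddCircle T => (toCircle x : ℂ) :=
    Subtype.val_injective.comp (injective_toCircle (Fact.out : 0 < T).ne')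
  rw [ae_iff]
  refine measure_mono_null (fun x hx => ?_)
    (((finite_setOf_sum_mul_zpow_eq_zero F e he c hc).preimage hinj.injOn).measure_zero volume)
  simp only [Set.mem_ofPred_eq, not_not, fourier_apply, toCircle_zsmul, Circle.coe_zpow] at hx
  exact ⟨Circle.coe_ne_zero _, hx⟩

@[fun_prop]
theorem continuous_char (n : ℤ × ℤ) : Continuous (char n) := by
  unfold char; fun_prop

theorem sum_mul_char_eq_sum_mul_fourier_snd (F : Finset (ℤ × ℤ)) (c : ℤ × ℤ → ℂ) (x y : 𝕋) :
    ∑ n ∈ F, c n * char n (x, y) =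
      ∑ k ∈ F.image Prod.snd, (∑ n ∈ F with n.2 = k, c n * fourier n.1 x) * fourier k y := by
  rw [← Finset.sum_fiberwise_of_maps_to (g := Prod.snd) fun n hn => Finset.mem_image_of_mem _ hn]
  refine Finset.sum_congr rfl fun k _ => ?_
  rw [Finset.sum_mul]
  refine Finset.sum_congr rfl fun n hn => ?_
  rw [← (Finset.mem_filter.mp hn).2, char]
  ring

theorem ae_sum_mul_char_ne_zero (F : Finset (ℤ × ℤ)) (c : ℤ × ℤ → ℂ) (hc : ∃ n ∈ F, c n ≠ 0) :
    ∀ᵐ z : 𝕋2, ∑ n ∈ F, c n * char n z ≠ 0 := by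
  classical
  obtain ⟨n₀, hn₀, hcn₀⟩ := hc
  have hfst_injOn : Set.InjOn Prod.fst (F.filter (·.2 = n₀.2) : Set (ℤ × ℤ)) :=
    fun a ha b hb hab =>
      Prod.ext hab ((Finset.mem_filter.mp ha).2.trans (Finset.mem_filter.mp hb).2.symm)
  have hcoeff : ∀ᵐ x : 𝕋, ∑ n ∈ F with n.2 = n₀.2, c n * fourier n.1 x ≠ 0 :=
    AddCircle.ae_sum_mul_fourier_ne_zero _ Prod.fst hfst_injOn c
      ⟨n₀, Finset.mem_filter.mpr ⟨hn₀, rfl⟩, hcn₀⟩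
  have hmeas : MeasurableSet {z : 𝕋2 | ∑ n ∈ F, c n * char n z ≠ 0} :=
    (isClosed_eq (by fun_prop) continuous_const).isOpen_compl.measurableSet
  rw [Measure.volume_eq_prod, Measure.ae_prod_iff_ae_ae hmeas]
  filter_upwards [hcoeff] with x hx
  simpa only [sum_mul_char_eq_sum_mul_fourier_snd, id] using
    AddCircle.ae_sum_mul_fourier_ne_zero _ id (Set.injOn_id _) _
      ⟨n₀.2, Finset.mem_image_of_mem _ hn₀, hx⟩

theorem IsEig.ae_ne_zero {lam : ℝ} {w : 𝕋2 → ℂ} (hw : IsEig lam w) (hw0 : ¬ w =ᵐ[volume] 0) :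
    ∀ᵐ z, w z ≠ 0 := by
  obtain ⟨F, c, hFc, hae⟩ := hw
  obtain ⟨n₀, hn₀⟩ := F.eq_empty_or_nonempty.resolve_left fun hF => hw0 (by
    filter_upwards [hae] with z hz
    simpa [hF] using hz)
  filter_upwards [hae, ae_sum_mul_char_ne_zero F c ⟨n₀, hn₀, (hFc n₀ hn₀).2⟩] with z hz hne
  rwa [hz]

theorem IsEig.ae_eq_zero_of_ae_mul_eq_zero {W : 𝕋2 → ℂ} (hWpos : 0 < volume {z | W z ≠ 0})
    {lam : ℝ} {w : 𝕋2 → ℂ} (hw : IsEig lam w) (hWw : ∀ᵐ z, W z * w z = 0) : w =ᵐ[volume] 0 := by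
  by_contra hw0
  have hW0 : ∀ᵐ z, W z = 0 := by
    filter_upwards [hWw, hw.ae_ne_zero hw0] with z hWwz hwz
    exact (mul_eq_zero.mp hWwz).resolve_right hwz
  exact hWpos.ne' (by simpa [ae_iff] using hW0)

theorem stmt2_general (W : 𝕋2 → ℂ) (hWpos : 0 < volume {z | W z ≠ 0}) :
    (∀ (lam : ℝ) (w : 𝕋2 → ℂ), MemLp w 2 volume → IsEig lam w →
        (∀ᵐ z ∂volume, W z * w z = 0) → w =ᵐ[volume] (0 : 𝕋2 → ℂ)) ∧
    (∀ N : Set (𝕋2 → ℂ),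
      ((¬ ∀ u ∈ N, u =ᵐ[volume] (0 : 𝕋2 → ℂ)) →
        ∃ w ∈ N, ¬ w =ᵐ[volume] (0 : 𝕋2 → ℂ) ∧ MemLp w 2 volume ∧
          (∃ lam, IsEig lam w) ∧ ∀ᵐ z ∂volume, W z * w z = 0) →
      ∀ u ∈ N, u =ᵐ[volume] (0 : 𝕋2 → ℂ)) := by
  refine ⟨fun _ _ _ hw hWw => IsEig.ae_eq_zero_of_ae_mul_eq_zero hWpos hw hWw, fun N hN => ?_⟩
  by_contra hN0
  obtain ⟨w, -, hw0, -, ⟨_, hw⟩, hWw⟩ := hN hN0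
  exact hw0 (hw.ae_eq_zero_of_ae_mul_eq_zero hWpos hWw)

/-- if `W ∈ L⁴(𝕋²)` is nonzero (positive measure) and `w ∈ L²` is an
eigenfunction of `-Δ` with `W w = 0` a.e., then `w = 0`; consequently a space `N` which,
if nontrivial, contains a nontrivial eigenfunction `w` with `W w ≡ 0` (via invariance of
`N` under `Δ`, from `W e^{itΔ}u ≡ 0` for `u ∈ N`) must be trivial. -/
theorem stmt2 (W : 𝕋2 → ℂ) (hW : MemLp W 4 volume) (hWpos : 0 < volume {z | W z ≠ 0}) :
    (∀ (lam : ℝ) (w : 𝕋2 → ℂ), MemLp w 2 volume → IsEig lam w →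
        (∀ᵐ z ∂volume, W z * w z = 0) → w =ᵐ[volume] (0 : 𝕋2 → ℂ)) ∧
    (∀ N : Set (𝕋2 → ℂ),
      ((¬ ∀ u ∈ N, u =ᵐ[volume] (0 : 𝕋2 → ℂ)) →
        ∃ w ∈ N, ¬ w =ᵐ[volume] (0 : 𝕋2 → ℂ) ∧ MemLp w 2 volume ∧
          (∃ lam, IsEig lam w) ∧ ∀ᵐ z ∂volume, W z * w z = 0) →
      ∀ u ∈ N, u =ᵐ[volume] (0 : 𝕋2 → ℂ)) :=
  stmt2_general W hWpos
end
end

section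
/- Let ν̃ be a finite positive Borel measure on 𝕋² × S¹ that is invariant under the geodesic flow in the sense that ∫ A(z + sζ, ζ) dν̃(z,ζ) = ∫ A(z,ζ) dν̃(z,ζ) for all continuous A and all s ∈ ℝ. Suppose a_j ∈ C(𝕋²), a_j ≥ 0, and for each j, ∫ a_j(z) dν̃(z,ζ) ≤ C_j where C_j → 0. If the restriction of ν̃ to irrational directions W_∞ = {(z,ζ) : ζ ∉ ℚ·S¹} satisfies, via unique ergodicity, that the time averages ⟨a_j⟩_S(z,ζ) = (1/S)∫₀^S a_j(z+sζ)ds converge pointwise on W_∞ to the space average ⟨a_j⟩ = (2π)^{-2}∫ a_j dz as S → ∞, and ⟨a_j⟩ → ⟨a⟩ > 0, then ν̃(W_∞) = 0. -/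
open MeasureTheory Filter Topology

noncomputable section

/-- the unit circle of directions -/
abbrev Sph := Metric.sphere (0 : EuclideanSpace ℝ (Fin 2)) 1

/-- the geodesic (straight-line) flow on `𝕋² × S¹` -/
def geoFlow (s : ℝ) (p : 𝕋2 × Sph) : 𝕋2 × Sph :=
  ((p.1.1 + ((s * (p.2 : EuclideanSpace ℝ (Fin 2)) 0 : ℝ) : 𝕋),
    p.1.2 + ((s * (p.2 : EuclideanSpace ℝ (Fin 2)) 1 : ℝ) : 𝕋)), p.2)

/-- the set of irrational directions -/
def Winf : Set (𝕋2 × Sph) :=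
  {p | ¬ ∃ k : ℤ × ℤ, k ≠ 0 ∧ ∃ t : ℝ,
    (p.2 : EuclideanSpace ℝ (Fin 2)) 0 = t * k.1 ∧ (p.2 : EuclideanSpace ℝ (Fin 2)) 1 = t * k.2}

/-! By invariance of `ν̃` and Tonelli, every time average `⟨a_j⟩_S` has `ν̃`-integral
`∫ a_j dν̃ ≤ C_j`. On `W_∞` these averages converge to `⟨a_j⟩`, so Fatou's lemma gives
`⟨a_j⟩ ν̃(W_∞) ≤ C_j`; letting `j → ∞` yields `⟨a⟩ ν̃(W_∞) = 0` with `⟨a⟩ > 0`. -/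

open scoped ENNReal
open Set

lemma IsSigmaCompact.measurableSet {X : Type*} [TopologicalSpace X] [T2Space X]
    [MeasurableSpace X] [OpensMeasurableSpace X] {s : Set X} (hs : IsSigmaCompact s) :
    MeasurableSet s := by
  obtain ⟨K, hK, rfl⟩ := hs
  exact .iUnion fun n => (hK n).measurableSet

lemma measurableSet_setOf_exists_real {X : Type*} [TopologicalSpace X] [SigmaCompactSpace X]
    [T2Space X] [MeasurableSpace X] [OpensMeasurableSpace X] {P : X → ℝ → Prop}
    (hP : IsClosed {q : X × ℝ | P q.1 q.2}) : MeasurableSet {p | ∃ t, P p t} := by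
  have : {p | ∃ t, P p t} = Prod.fst '' {q : X × ℝ | P q.1 q.2} := by ext; simp
  rw [this]
  exact ((isSigmaCompact_univ.of_isClosed_subset hP (subset_univ _)).image
    continuous_fst).measurableSet

lemma continuous_uncurry_geoFlow : Continuous (Function.uncurry geoFlow) := by
  unfold geoFlow Function.uncurry
  have := AddCircle.continuous_mk' (2 * Real.pi)
  fun_prop

-- `W_∞` is an intersection of complements of projections of closed subsets of `𝕋² × S¹ × ℝ`.
lemma measurableSet_Winf : MeasurableSet Winf := by
  have : Winf = ⋂ k : ℤ × ℤ, ⋂ (_ : k ≠ 0), {p | ∃ t : ℝ,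
      (p.2 : EuclideanSpace ℝ (Fin 2)) 0 = t * k.1 ∧
        (p.2 : EuclideanSpace ℝ (Fin 2)) 1 = t * k.2}ᶜ := by
    ext p; simp [Winf]
  rw [this]
  refine .iInter fun k => .iInter fun _ => (measurableSet_setOf_exists_real ?_).compl
  refine (isClosed_eq ?_ ?_).inter (isClosed_eq ?_ ?_) <;> fun_prop

section Flow

variable {X : Type*} [TopologicalSpace X]

def timeAverage (Φ : ℝ → X → X) (f : X → ℝ) (S : ℝ) (p : X) : ℝ≥0∞ :=
  (ENNReal.ofReal S)⁻¹ * ∫⁻ s in Ioc 0 S, ENNReal.ofReal (f (Φ s p))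

variable {Φ : ℝ → X → X} {f : X → ℝ}

lemma ofReal_average_eq_timeAverage (hΦ : Continuous (Function.uncurry Φ)) (hf : Continuous f)
    (hf0 : 0 ≤ f) (p : X) {S : ℝ} (hS : 0 < S) :
    ENNReal.ofReal ((1 / S) * ∫ s in Ioc 0 S, f (Φ s p)) = timeAverage Φ f S p := by
  have hcont : Continuous fun s => f (Φ s p) := hf.comp (hΦ.comp (Continuous.prodMk_left p))
  rw [timeAverage, ENNReal.ofReal_mul (by positivity), one_div, ENNReal.ofReal_inv_of_pos hS,
    ofReal_integral_eq_lintegral_ofReal hcont.integrableOn_Ioc (.of_forall fun s => hf0 _)]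

lemma tendsto_timeAverage (hΦ : Continuous (Function.uncurry Φ)) (hf : Continuous f)
    (hf0 : 0 ≤ f) {p : X} {m : ℝ}
    (hp : Tendsto (fun S : ℝ => (1 / S) * ∫ s in Ioc 0 S, f (Φ s p)) atTop (𝓝 m)) :
    Tendsto (fun n : ℕ => timeAverage Φ f n p) atTop (𝓝 (ENNReal.ofReal m)) :=
  (ENNReal.tendsto_ofReal (hp.comp tendsto_natCast_atTop_atTop)).congr'
    ((eventually_gt_atTop 0).mono fun _ hn =>
      ofReal_average_eq_timeAverage hΦ hf hf0 p (Nat.cast_pos.mpr hn))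

variable [MeasurableSpace X] [OpensMeasurableSpace X]

lemma measurable_timeAverage (hΦ : Continuous (Function.uncurry Φ)) (hf : Continuous f)
    (S : ℝ) : Measurable (timeAverage Φ f S) :=
  ((ENNReal.continuous_ofReal.comp (hf.comp (hΦ.comp continuous_swap))).measurable
    |>.lintegral_prod_right').const_mul _

variable [CompactSpace X] {ν : Measure X} [IsFiniteMeasure ν]

lemma lintegral_ofReal_eq_ofReal_integral (hf : Continuous f) (hf0 : 0 ≤ f) :
    ∫⁻ p, ENNReal.ofReal (f p) ∂ν = ENNReal.ofReal (∫ p, f p ∂ν) :=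
  (ofReal_integral_eq_lintegral_ofReal
    (hf.integrable_of_hasCompactSupport (.of_compactSpace f)) (.of_forall hf0)).symm

lemma lintegral_timeAverage (hΦ : Continuous (Function.uncurry Φ))
    (hinv : ∀ s : ℝ, ∀ A : X → ℝ, Continuous A → ∫ p, A (Φ s p) ∂ν = ∫ p, A p ∂ν)
    (hf : Continuous f) (hf0 : 0 ≤ f) {S : ℝ} (hS : 0 < S) :
    ∫⁻ p, timeAverage Φ f S p ∂ν = ∫⁻ p, ENNReal.ofReal (f p) ∂ν := by
  have hF : Measurable fun q : X × ℝ => ENNReal.ofReal (f (Φ q.2 q.1)) :=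
    (ENNReal.continuous_ofReal.comp (hf.comp (hΦ.comp continuous_swap))).measurable
  have hΦs (s : ℝ) : Continuous (Φ s) := hΦ.comp (Continuous.prodMk_right s)
  have hinv' (s : ℝ) : ∫⁻ p, ENNReal.ofReal (f (Φ s p)) ∂ν = ∫⁻ p, ENNReal.ofReal (f p) ∂ν := by
    rw [lintegral_ofReal_eq_ofReal_integral (f := fun p => f (Φ s p)) (hf.comp (hΦs s))
        fun p => hf0 (Φ s p),
      lintegral_ofReal_eq_ofReal_integral hf hf0, hinv s f hf]
  calc ∫⁻ p, timeAverage Φ f S p ∂ν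
      = (ENNReal.ofReal S)⁻¹ * ∫⁻ s in Ioc 0 S, ∫⁻ p, ENNReal.ofReal (f (Φ s p)) ∂ν := by
        rw [← lintegral_lintegral_swap hF.aemeasurable]
        exact lintegral_const_mul _ hF.lintegral_prod_right'
    _ = (ENNReal.ofReal S)⁻¹ * ((∫⁻ p, ENNReal.ofReal (f p) ∂ν) * ENNReal.ofReal S) := by
        simp only [hinv', setLIntegral_const, Real.volume_Ioc, sub_zero]
    _ = ∫⁻ p, ENNReal.ofReal (f p) ∂ν := by
        rw [mul_comm, mul_assoc, ENNReal.mul_inv_cancel (by simpa using hS) ENNReal.ofReal_ne_top,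
          mul_one]

end Flow

lemma mul_measure_le_of_tendsto_of_lintegral_le {α : Type*} [MeasurableSpace α]
    {μ : Measure α} {W : Set α} (hW : MeasurableSet W) {F : ℕ → α → ℝ≥0∞}
    (hF : ∀ n, Measurable (F n)) {m c : ℝ≥0∞}
    (hlim : ∀ p ∈ W, Tendsto (fun n => F n p) atTop (𝓝 m))
    (hbound : ∀ᶠ n in atTop, ∫⁻ p, F n p ∂μ ≤ c) : m * μ W ≤ c :=
  calc m * μ W = ∫⁻ p in W, liminf (fun n => F n p) atTop ∂μ := by
        rw [setLIntegral_congr_fun hW fun p hp => (hlim p hp).liminf_eq, setLIntegral_const]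
    _ ≤ liminf (fun n => ∫⁻ p in W, F n p ∂μ) atTop := lintegral_liminf_le hF
    _ ≤ c := liminf_le_of_frequently_le'
        (hbound.mono fun _ hn => (setLIntegral_le_lintegral _ _).trans hn).frequently

lemma ENNReal.eq_zero_of_mul_le_of_tendsto {ι : Type*} {l : Filter ι} [l.NeBot]
    {m c : ι → ℝ≥0∞} {L x : ℝ≥0∞} (hm : Tendsto m l (𝓝 L)) (hL : L ≠ 0) (hc : Tendsto c l (𝓝 0))
    (hle : ∀ j, m j * x ≤ c j) : x = 0 := by
  have : L * x ≤ 0 := le_of_tendsto_of_tendsto' (ENNReal.Tendsto.mul_const hm (.inl hL)) hc hle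
  exact (mul_eq_zero.mp (nonpos_iff_eq_zero.mp this)).resolve_left hL

/-- if a finite flow-invariant measure `ν̃` on `𝕋² × S¹` satisfies
`∫ a_j dν̃ ≤ C_j → 0` for continuous `a_j ≥ 0` whose Birkhoff averages converge on the
irrational directions to means `⟨a_j⟩ → ⟨a⟩ > 0`, then `ν̃(W_∞) = 0`. -/
theorem stmt8 (ν : Measure (𝕋2 × Sph)) [IsFiniteMeasure ν]
    (hinv : ∀ s : ℝ, ∀ A : 𝕋2 × Sph → ℝ, Continuous A →
      (∫ p, A (geoFlow s p) ∂ν) = ∫ p, A p ∂ν)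
    (a : ℕ → 𝕋2 → ℝ) (hacont : ∀ j, Continuous (a j)) (ha0 : ∀ j z, 0 ≤ a j z)
    (C : ℕ → ℝ) (hbound : ∀ j, (∫ p, a j p.1 ∂ν) ≤ C j)
    (hC : Tendsto C atTop (nhds 0))
    (hbirk : ∀ j, ∀ p ∈ Winf,
      Tendsto (fun S : ℝ => (1 / S) * ∫ s in Set.Ioc (0 : ℝ) S, a j (geoFlow s p).1)
        atTop (nhds (((2 * Real.pi) ^ 2)⁻¹ * ∫ z, a j z)))
    (L : ℝ) (hL : 0 < L)
    (hmean : Tendsto (fun j => ((2 * Real.pi) ^ 2)⁻¹ * ∫ z, a j z) atTop (nhds L)) :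
    ν Winf = 0 := by
  have hflow := continuous_uncurry_geoFlow
  have hkey (j : ℕ) : ENNReal.ofReal (((2 * Real.pi) ^ 2)⁻¹ * ∫ z, a j z) * ν Winf
      ≤ ENNReal.ofReal (C j) := by
    have hf : Continuous fun p : 𝕋2 × Sph => a j p.1 := (hacont j).comp continuous_fst
    have hf0 : 0 ≤ fun p : 𝕋2 × Sph => a j p.1 := fun p => ha0 j p.1
    refine mul_measure_le_of_tendsto_of_lintegral_le measurableSet_Winf
      (fun n => measurable_timeAverage hflow hf n)
      (fun p hp => tendsto_timeAverage hflow hf hf0 (hbirk j p hp))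
      ((eventually_gt_atTop 0).mono fun n hn => ?_)
    rw [lintegral_timeAverage hflow hinv hf hf0 (Nat.cast_pos.mpr hn),
      lintegral_ofReal_eq_ofReal_integral hf hf0]
    exact ENNReal.ofReal_le_ofReal (hbound j)
  exact ENNReal.eq_zero_of_mul_le_of_tendsto (ENNReal.tendsto_ofReal hmean) (by simpa using hL)
    (by simpa using ENNReal.tendsto_ofReal hC) hkey
end
end
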